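/- Fix an integer n ≥ 2 and let N = {a,b,c} ∪ {x_1,...,x_n}. Define f: P(N) → ℝ by f(J∪K) = θ_K + |J|·λ_K - μ_{JK} for J ⊆ {x_1,...,x_n}, K ⊆ {a,b,c}, where θ, λ, μ are the explicit constants given in the paper (e.g. θ_∅=0, θ_a=(n+1)(2n³+5n²), θ_b=(n+1)(4n²+2n-1), θ_c=(n+1)(3n²+n), θ_{ab}=(n+1)(2n³+8n²+4n-1), θ_{ac}=(n+1)(2n³+5n²+2n), θ_{bc}=(n+1)(6n²+4n-1), θ_{abc}=(n+1)(2n³+8n²+4n-1); λ_∅=-n², λ_a=-(2n³+5n²+2n), λ_b=-(4n²+2n-1), λ_c=-(4n²+2n-1), λ_{ab}=-(2n³+8n²+4n-1), λ_{ac}=-(2n³+5n²+2n), λ_{bc}=-(6n²+4n-1), λ_{abc}=-(2n³+8n²+4n-1); and μ_{JK}=0 except μ for J=∅,K={a} equal to 2n²(n+1) and for J=∅,K={a,b} equal to 2n(n+1)²). Then f is submodular: f(M₁)+f(M₂) ≥ f(M₁∪M₂)+f(M₁∩M₂) for all M₁, M₂ ⊆ N. -/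
import Mathlib


open Finset BigOperators

noncomputable section

/-- A set function is submodular if `f(M₁) + f(M₂) ≥ f(M₁ ∪ M₂) + f(M₁ ∩ M₂)`. -/
def Submodular {N : Type*} [DecidableEq N] (f : Finset N → ℝ) : Prop :=
  ∀ M₁ M₂ : Finset N, f M₁ + f M₂ ≥ f (M₁ ∪ M₂) + f (M₁ ∩ M₂)

/-- The conditional mutual information `f(α:β|γ)` of a set function. -/
def cmi {N : Type*} [DecidableEq N] (f : Finset N → ℝ) (α β γ : Finset N) : ℝ :=
  -f γ + f (α ∪ γ) + f (β ∪ γ) - f (α ∪ β ∪ γ)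

abbrev Idx (n : ℕ) := Sum (Fin 3) (Fin n)

/-- The constants `θ_K` of the paper, indexed by membership of `a`, `b`, `c` in `K`. -/
def theta (n : ℝ) : Bool → Bool → Bool → ℝ
  | true,  true,  true  => (n+1) * (2*n^3 + 8*n^2 + 4*n - 1)
  | true,  true,  false => (n+1) * (2*n^3 + 8*n^2 + 4*n - 1)
  | true,  false, true  => (n+1) * (2*n^3 + 5*n^2 + 2*n)
  | false, true,  true  => (n+1) * (6*n^2 + 4*n - 1)
  | true,  false, false => (n+1) * (2*n^3 + 5*n^2)
  | false, true,  false => (n+1) * (4*n^2 + 2*n - 1)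
  | false, false, true  => (n+1) * (3*n^2 + n)
  | false, false, false => 0

/-- The constants `λ_K` of the paper, indexed by membership of `a`, `b`, `c` in `K`. -/
def lam (n : ℝ) : Bool → Bool → Bool → ℝ
  | true,  true,  true  => -(2*n^3 + 8*n^2 + 4*n - 1)
  | true,  true,  false => -(2*n^3 + 8*n^2 + 4*n - 1)
  | true,  false, true  => -(2*n^3 + 5*n^2 + 2*n)
  | false, true,  true  => -(6*n^2 + 4*n - 1)
  | true,  false, false => -(2*n^3 + 5*n^2 + 2*n)
  | false, true,  false => -(4*n^2 + 2*n - 1)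
  | false, false, true  => -(4*n^2 + 2*n - 1)
  | false, false, false => -(n^2)

/-- The explicit function `f(JK) = θ_K + |J| λ_K - μ_{JK}` of the paper on the ground set
`{a, b, c, x_1, …, x_n}`, with `a = inl 0`, `b = inl 1`, `c = inl 2`, `x_i = inr i`;
`μ` is nonzero only on `{a}` (value `2n²(n+1)`) and `{a,b}` (value `2n(n+1)²`). -/
noncomputable def fpaper (n : ℕ) (M : Finset (Idx n)) : ℝ :=
  theta (n : ℝ) (decide ((Sum.inl 0 : Idx n) ∈ M)) (decide ((Sum.inl 1 : Idx n) ∈ M))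
      (decide ((Sum.inl 2 : Idx n) ∈ M))
    + ((M.filter (fun i => i.isRight = true)).card : ℝ) *
      lam (n : ℝ) (decide ((Sum.inl 0 : Idx n) ∈ M)) (decide ((Sum.inl 1 : Idx n) ∈ M))
        (decide ((Sum.inl 2 : Idx n) ∈ M))
    - (if M = ({Sum.inl 0} : Finset (Idx n)) then 2 * (n : ℝ)^2 * ((n : ℝ) + 1)
       else if M = ({Sum.inl 0, Sum.inl 1} : Finset (Idx n)) then 2 * (n : ℝ) * ((n : ℝ) + 1)^2
       else 0)

/- auxiliary machinery -/

lemma submodular_of_pairwise {N : Type*} [DecidableEq N] (f : Finset N → ℝ)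
    (h : ∀ (i j : N) (α : Finset N), i ≠ j → i ∉ α → j ∉ α →
      f (insert i α) + f (insert j α) ≥ f (insert i (insert j α)) + f α) :
    Submodular f := by
  have D : ∀ m : ℕ, ∀ α β : Finset N, (β \ α).card = m → α ⊆ β → ∀ i, i ∉ β →
      f (insert i α) - f α ≥ f (insert i β) - f β := by
    intro m
    induction m with
    | zero =>
      intro α β hcard hsub i hi
      have hβα : β = α :=
        Finset.Subset.antisymm
          (Finset.sdiff_eq_empty_iff_subset.mp (Finset.card_eq_zero.mp hcard)) hsub
      subst hβα; linarith
    | succ m ih =>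
      intro α β hcard hsub i hi
      obtain ⟨j, hj⟩ : (β \ α).Nonempty := Finset.card_pos.mp (by omega)
      have hjβ : j ∈ β := (Finset.mem_sdiff.mp hj).1
      have hjα : j ∉ α := (Finset.mem_sdiff.mp hj).2
      set β' := β.erase j with hβ'
      have hsub' : α ⊆ β' := Finset.subset_erase.mpr ⟨hsub, hjα⟩
      have hcard' : (β' \ α).card = m := by
        have : β' \ α = (β \ α).erase j := by
          rw [hβ', Finset.erase_sdiff_comm]
        rw [this, Finset.card_erase_of_mem hj, hcard]
        omega
      have hiβ' : i ∉ β' := fun hmem => hi (Finset.mem_of_mem_erase hmem)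
      have h1 := ih α β' hcard' hsub' i hiβ'
      have hij : i ≠ j := fun hh => hi (hh ▸ hjβ)
      have h2 := h i j β' hij hiβ' (Finset.notMem_erase j β)
      have hins : insert j β' = β := Finset.insert_erase hjβ
      rw [hins] at h2
      linarith
  have S : ∀ m : ℕ, ∀ M₁ M₂ : Finset N, (M₁ \ M₂).card = m →
      f M₁ + f M₂ ≥ f (M₁ ∪ M₂) + f (M₁ ∩ M₂) := by
    intro m
    induction m with
    | zero =>
      intro M₁ M₂ hcard
      have hsub : M₁ ⊆ M₂ :=
        Finset.sdiff_eq_empty_iff_subset.mp (Finset.card_eq_zero.mp hcard)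
      rw [Finset.union_eq_right.mpr hsub, Finset.inter_eq_left.mpr hsub]
      linarith
    | succ m ih =>
      intro M₁ M₂ hcard
      obtain ⟨i, hi⟩ : (M₁ \ M₂).Nonempty := Finset.card_pos.mp (by omega)
      have hi1 : i ∈ M₁ := (Finset.mem_sdiff.mp hi).1
      have hi2 : i ∉ M₂ := (Finset.mem_sdiff.mp hi).2
      set M₁' := M₁.erase i with hM₁'
      have hins : insert i M₁' = M₁ := Finset.insert_erase hi1
      have hiM₁' : i ∉ M₁' := Finset.notMem_erase i M₁
      have hiU : i ∉ M₁' ∪ M₂ := by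
        simp only [Finset.mem_union]; tauto
      have hD := D ((M₁' ∪ M₂) \ M₁').card M₁' (M₁' ∪ M₂) rfl Finset.subset_union_left i hiU
      have hinsU : insert i (M₁' ∪ M₂) = M₁ ∪ M₂ := by
        rw [← Finset.insert_union, hins]
      rw [hins, hinsU] at hD
      have hcard' : (M₁' \ M₂).card = m := by
        have : M₁' \ M₂ = (M₁ \ M₂).erase i := by
          rw [hM₁', Finset.erase_sdiff_comm]
        rw [this, Finset.card_erase_of_mem hi, hcard]
        omega
      have hIH := ih M₁' M₂ hcard'
      have hinter : M₁' ∩ M₂ = M₁ ∩ M₂ := by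
        rw [hM₁', Finset.erase_inter, Finset.erase_eq_of_notMem (by simp [hi2])]
      rw [hinter] at hIH
      linarith
  intro M₁ M₂
  exact S (M₁ \ M₂).card M₁ M₂ rfl

noncomputable def mu' (n : ℝ) : Bool → Bool → Bool → ℕ → ℝ
  | true,  false, false, 0 => 2 * n^2 * (n + 1)
  | true,  true,  false, 0 => 2 * n * (n + 1)^2
  | _, _, _, _ => 0

lemma mu'_succ (n : ℝ) (A B C : Bool) (k : ℕ) : mu' n A B C (k+1) = 0 := by
  cases A <;> cases B <;> cases C <;> rfl

lemma mu'_nonneg (n : ℝ) (hn : 0 ≤ n) (A B C : Bool) (k : ℕ) : 0 ≤ mu' n A B C k := by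
  cases A <;> cases B <;> cases C <;> rcases k with _ | k <;> simp [mu'] <;> positivity

lemma eq_singleton_a_iff (n : ℕ) (M : Finset (Idx n)) :
    M = ({Sum.inl 0} : Finset (Idx n)) ↔
      ((Sum.inl 0 : Idx n) ∈ M ∧ (Sum.inl 1 : Idx n) ∉ M ∧ (Sum.inl 2 : Idx n) ∉ M ∧
        (M.filter (fun i => i.isRight = true)).card = 0) := by
  constructor
  · rintro rfl
    refine ⟨by simp, by simp, by simp, by
      rw [Finset.card_eq_zero]; ext x; rcases x with t | p <;> simp [Finset.mem_filter]⟩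
  · rintro ⟨h0, h1, h2, hk⟩
    have hf : M.filter (fun i => i.isRight = true) = ∅ := Finset.card_eq_zero.mp hk
    ext x
    rcases x with t | p
    · fin_cases t <;> simp_all
    · simp only [Finset.mem_singleton]
      constructor
      · intro hx
        have : (Sum.inr p : Idx n) ∈ M.filter (fun i => i.isRight = true) := by
          simp [hx]
        rw [hf] at this
        simp at this
      · intro hh
        simp at hh

lemma eq_pair_ab_iff (n : ℕ) (M : Finset (Idx n)) :
    M = ({Sum.inl 0, Sum.inl 1} : Finset (Idx n)) ↔
      ((Sum.inl 0 : Idx n) ∈ M ∧ (Sum.inl 1 : Idx n) ∈ M ∧ (Sum.inl 2 : Idx n) ∉ M ∧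
        (M.filter (fun i => i.isRight = true)).card = 0) := by
  constructor
  · rintro rfl
    refine ⟨by simp, by simp, by simp, by
      rw [Finset.card_eq_zero]; ext x; rcases x with t | p <;> simp [Finset.mem_filter]⟩
  · rintro ⟨h0, h1, h2, hk⟩
    have hf : M.filter (fun i => i.isRight = true) = ∅ := Finset.card_eq_zero.mp hk
    ext x
    rcases x with t | p
    · fin_cases t <;> simp_all
    · simp only [Finset.mem_insert, Finset.mem_singleton]
      constructor
      · intro hx
        have : (Sum.inr p : Idx n) ∈ M.filter (fun i => i.isRight = true) := by
          simp [hx]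
        rw [hf] at this
        simp at this
      · rintro (hh | hh) <;> simp at hh

lemma fpaper_eq (n : ℕ) (M : Finset (Idx n)) :
    fpaper n M =
      theta n (decide ((Sum.inl 0 : Idx n) ∈ M)) (decide ((Sum.inl 1 : Idx n) ∈ M))
          (decide ((Sum.inl 2 : Idx n) ∈ M))
        + ((M.filter (fun i => i.isRight = true)).card : ℝ) *
          lam n (decide ((Sum.inl 0 : Idx n) ∈ M)) (decide ((Sum.inl 1 : Idx n) ∈ M))
            (decide ((Sum.inl 2 : Idx n) ∈ M))
        - mu' n (decide ((Sum.inl 0 : Idx n) ∈ M)) (decide ((Sum.inl 1 : Idx n) ∈ M))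
            (decide ((Sum.inl 2 : Idx n) ∈ M)) (M.filter (fun i => i.isRight = true)).card := by
  unfold fpaper
  congr 1
  rcases hk : (M.filter (fun i => i.isRight = true)).card with _ | m <;>
    by_cases h0 : (Sum.inl 0 : Idx n) ∈ M <;> by_cases h1 : (Sum.inl 1 : Idx n) ∈ M <;>
      by_cases h2 : (Sum.inl 2 : Idx n) ∈ M <;>
    simp [eq_singleton_a_iff, eq_pair_ab_iff, h0, h1, h2, hk, mu']

section helpers
variable {n : ℕ}

@[simp] lemma filter_insert_inl (t : Fin 3) (s : Finset (Idx n)) :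
    (insert (Sum.inl t) s).filter (fun i => i.isRight = true) =
      s.filter (fun i => i.isRight = true) := by
  rw [Finset.filter_insert]; simp

@[simp] lemma card_filter_insert_inr (p : Fin n) (s : Finset (Idx n))
    (hp : (Sum.inr p : Idx n) ∉ s) :
    ((insert (Sum.inr p) s).filter (fun i => i.isRight = true)).card =
      (s.filter (fun i => i.isRight = true)).card + 1 := by
  rw [Finset.filter_insert]
  simp only [Sum.isRight_inr, if_true]
  rw [Finset.card_insert_of_notMem (by simp [hp])]

lemma card_filter_isRight_le (M : Finset (Idx n)) :
    (M.filter (fun i => i.isRight = true)).card ≤ n := by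
  have hsub : M.filter (fun i => i.isRight = true) ⊆
      (Finset.univ : Finset (Fin n)).image Sum.inr := by
    intro x hx
    rcases x with t | p
    · simp at hx
    · simp
  calc (M.filter (fun i => i.isRight = true)).card
      ≤ ((Finset.univ : Finset (Fin n)).image Sum.inr).card := Finset.card_le_card hsub
    _ = n := by
        rw [Finset.card_image_of_injective _ Sum.inr_injective, Finset.card_univ,
          Fintype.card_fin]

end helpers

set_option maxHeartbeats 2000000 in
lemma fpaper_pairwise (n : ℕ) (hn : 2 ≤ n) (i j : Idx n) (α : Finset (Idx n))
    (hij : i ≠ j) (hi : i ∉ α) (hj : j ∉ α) :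
    fpaper n (insert i α) + fpaper n (insert j α) ≥
      fpaper n (insert i (insert j α)) + fpaper n α := by
  have hn' : (2:ℝ) ≤ (n:ℝ) := by exact_mod_cast hn
  have hkn : ((α.filter (fun i => i.isRight = true)).card : ℝ) ≤ (n:ℝ) := by
    exact_mod_cast card_filter_isRight_le α
  have P1 : (0:ℝ) ≤ 3*(n:ℝ)^2+2*(n:ℝ)-1 := by nlinarith
  have P2 : (0:ℝ) ≤ (n:ℝ)^2-1 := by nlinarith
  have P3 : (0:ℝ) ≤ 2*(n:ℝ)^2+2*(n:ℝ) := by nlinarith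
  have P4 : (0:ℝ) ≤ (n:ℝ)^2 := sq_nonneg _
  obtain ⟨k, hk⟩ : ∃ k, (α.filter (fun i => i.isRight = true)).card = k := ⟨_, rfl⟩
  rw [hk] at hkn
  rw [fpaper_eq, fpaper_eq, fpaper_eq, fpaper_eq]
  rcases i with ti | pi <;> rcases j with tj | pj
  · -- letter–letter
    simp only [filter_insert_inl, hk]
    fin_cases ti <;> fin_cases tj <;>
      first
        | exact absurd rfl hij
        | (by_cases h0 : (Sum.inl 0 : Idx n) ∈ α <;>
           by_cases h1 : (Sum.inl 1 : Idx n) ∈ α <;>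
           by_cases h2 : (Sum.inl 2 : Idx n) ∈ α <;>
           first
             | exact absurd h0 hi
             | exact absurd h1 hi
             | exact absurd h2 hi
             | exact absurd h0 hj
             | exact absurd h1 hj
             | exact absurd h2 hj
             | (rcases k with _ | m <;>
                simp [h0, h1, h2, theta, lam, mu'] <;>
                push_cast at hkn ⊢ <;>
                nlinarith [hkn, hn', mul_nonneg (sub_nonneg.mpr hkn) P1,
             mul_nonneg (sub_nonneg.mpr hkn) P2, mul_nonneg (sub_nonneg.mpr hkn) P3, P4]))
  · -- letter–x
    have hpj2 : (Sum.inr pj : Idx n) ∉ insert (Sum.inl ti) α := by simp [hj]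
    simp only [filter_insert_inl, card_filter_insert_inr _ _ hj, hk]
    fin_cases ti <;>
      by_cases h0 : (Sum.inl 0 : Idx n) ∈ α <;>
      by_cases h1 : (Sum.inl 1 : Idx n) ∈ α <;>
      by_cases h2 : (Sum.inl 2 : Idx n) ∈ α <;>
      first
        | exact absurd h0 hi
        | exact absurd h1 hi
        | exact absurd h2 hi
        | (rcases k with _ | m <;>
           simp [h0, h1, h2, theta, lam, mu'] <;>
           push_cast at hkn ⊢ <;>
           nlinarith [hkn, hn', mul_nonneg (sub_nonneg.mpr hkn) P1,
             mul_nonneg (sub_nonneg.mpr hkn) P2, mul_nonneg (sub_nonneg.mpr hkn) P3, P4])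
  · -- x–letter
    have hpi2 : (Sum.inr pi : Idx n) ∉ insert (Sum.inl tj) α := by simp [hi]
    simp only [filter_insert_inl, card_filter_insert_inr _ _ hi,
      card_filter_insert_inr _ _ hpi2, hk]
    fin_cases tj <;>
      by_cases h0 : (Sum.inl 0 : Idx n) ∈ α <;>
      by_cases h1 : (Sum.inl 1 : Idx n) ∈ α <;>
      by_cases h2 : (Sum.inl 2 : Idx n) ∈ α <;>
      first
        | exact absurd h0 hj
        | exact absurd h1 hj
        | exact absurd h2 hj
        | (rcases k with _ | m <;>
           simp [h0, h1, h2, theta, lam, mu'] <;>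
           push_cast at hkn ⊢ <;>
           nlinarith [hkn, hn', mul_nonneg (sub_nonneg.mpr hkn) P1,
             mul_nonneg (sub_nonneg.mpr hkn) P2, mul_nonneg (sub_nonneg.mpr hkn) P3, P4])
  · -- x–x case
    have hpij : (Sum.inr pi : Idx n) ∉ insert (Sum.inr pj) α := by
      simp only [Finset.mem_insert]
      rintro (h | h)
      · exact hij h
      · exact hi h
    simp only [card_filter_insert_inr _ _ hi, card_filter_insert_inr _ _ hj,
      card_filter_insert_inr _ _ hpij, hk]
    simp only [Finset.mem_insert, reduceCtorEq, false_or, decide_eq_true_eq]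
    simp only [mu'_succ]
    have hmu := mu'_nonneg (n:ℝ) (by linarith) (decide ((Sum.inl 0 : Idx n) ∈ α))
      (decide ((Sum.inl 1 : Idx n) ∈ α)) (decide ((Sum.inl 2 : Idx n) ∈ α)) k
    push_cast
    ring_nf
    ring_nf at hmu
    linarith [hmu]


/-- The explicit function `f` of the paper is submodular (for `n ≥ 2`). -/
theorem fpaper_submodular (n : ℕ) (hn : 2 ≤ n) : Submodular (fpaper n) := by
  exact submodular_of_pairwise _ (fun i j α hij hi hj => fpaper_pairwise n hn i j α hij hi hj)
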